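/- Let R be a commutative ℚ-algebra and let a, b ∈ R be nilpotent with b² = 0. Then (1 - b) · ∑_{k≥0} (a+b)^k/(k+1)! = ∑_{k≥0} (a^k - b·a^{k-1})/(k+1)!, where by convention a^{-1} = 0 (i.e. the k = 0 term of the right-hand side is 1). -/
import Mathlib


/-- Let `R` be a commutative `ℚ`-algebra and `a, b ∈ R` nilpotent with `b² = 0`.
Then `(1 - b) · ∑_{k≥0} (a+b)^k/(k+1)! = ∑_{k≥0} (a^k - b·a^{k-1})/(k+1)!`,
with the convention `a^{-1} = 0`.  The sums are finite: if `a^N = 0` and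
`(a+b)^N = 0`, then all terms with `k ≥ N` vanish, so we sum over `k < N`. -/
theorem one_sub_b_mul_todd_sum {R : Type*} [CommRing R] [Algebra ℚ R]
    (a b : R) (ha : IsNilpotent a) (hb : b ^ 2 = 0) (N : ℕ)
    (haN : a ^ N = 0) (habN : (a + b) ^ N = 0) :
    (1 - b) * ∑ k ∈ Finset.range N, (((k + 1).factorial : ℚ))⁻¹ • (a + b) ^ k =
      ∑ k ∈ Finset.range N, (((k + 1).factorial : ℚ))⁻¹ •
        (a ^ k - if k = 0 then 0 else b * a ^ (k - 1)) := by
  have hpow : ∀ k : ℕ, (a + b) ^ (k + 1) = a ^ (k + 1) + ((k : R) + 1) * (b * a ^ k) := by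
    intro k
    induction k with
    | zero => push_cast; ring
    | succ n ih =>
      have h2 : (a + b) ^ (n + 1 + 1) = (a + b) ^ (n + 1) * (a + b) := by ring
      rw [h2, ih]
      push_cast
      linear_combination ((n : R) + 1) * a ^ n * hb
  rcases N with _ | M
  · simp
  -- key: b * a ^ M = 0
  have hkey : b * a ^ M = 0 := by
    have h1 : ((M : R) + 1) * (b * a ^ M) = 0 := by
      have := habN
      rw [hpow M, haN] at this
      simpa using this
    have h2 : ((M : ℚ) + 1) • (b * a ^ M) = 0 := by
      rw [Algebra.smul_def, map_add, map_natCast, map_one]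
      exact h1
    have h3 : ((M : ℚ) + 1) ≠ 0 := by positivity
    have := congrArg (fun x => ((M : ℚ) + 1)⁻¹ • x) h2
    simpa [smul_smul, inv_mul_cancel₀ h3] using this
  rw [Finset.mul_sum, ← sub_eq_zero, ← Finset.sum_sub_distrib]
  set f : ℕ → R := fun k => (((k + 1).factorial : ℚ))⁻¹ • (b * a ^ k) with hf
  have hterm : ∀ k : ℕ,
      (1 - b) * ((((k + 1 + 1).factorial : ℚ))⁻¹ • (a + b) ^ (k + 1)) -
        (((k + 1 + 1).factorial : ℚ))⁻¹ •
          (a ^ (k + 1) - if k + 1 = 0 then 0 else b * a ^ (k + 1 - 1)) =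
        f k - f (k + 1) := by
    intro k
    simp only [hf, Nat.add_sub_cancel, if_neg (Nat.succ_ne_zero k)]
    rw [hpow k, mul_smul_comm, ← smul_sub]
    have hfac : (((k + 1 + 1).factorial : ℚ)) = ((k + 1 + 1 : ℕ) : ℚ) * ((k + 1).factorial : ℚ) := by
      rw [Nat.factorial_succ]; push_cast; ring
    have hcast : ((k + 1 + 1 : ℕ) : ℚ) ≠ 0 := by positivity
    have hfacne : (((k + 1).factorial : ℚ)) ≠ 0 := Nat.cast_ne_zero.mpr (Nat.factorial_ne_zero _)
    have hexp : (1 - b) * (a ^ (k + 1) + ((k : R) + 1) * (b * a ^ k)) -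
        (a ^ (k + 1) - b * a ^ k) =
        ((k + 1 + 1 : ℕ) : R) * (b * a ^ k) - b * a ^ (k + 1) := by
      push_cast
      linear_combination (-(k : R) - 1) * a ^ k * hb
    rw [hexp, smul_sub]
    congr 1
    · have h0 : ((k + 1 + 1 : ℕ) : R) * (b * a ^ k) = ((k + 1 + 1 : ℕ) : ℚ) • (b * a ^ k) := by
        rw [Algebra.smul_def, map_natCast]
      rw [h0, smul_smul]
      congr 1
      rw [hfac]
      field_simp
  rw [Finset.sum_range_succ']
  simp only [hterm]
  rw [Finset.sum_range_sub']
  have hf0 : f 0 = b := by simp [hf]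
  have hfM : f M = 0 := by simp [hf, hkey]
  rw [hf0, hfM]
  simp
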